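/- Let R be a (not necessarily commutative) ring and let d₀, d₁, …, dₙ ∈ R satisfy Σ_{i+j=k, 0≤i,j} dᵢ·dⱼ = 0 for every k with 0 ≤ k ≤ n. Then d₀ commutes with the element ω := Σ_{i=1}^{n} dᵢ·d_{n+1−i}, i.e. d₀·ω − ω·d₀ = 0. -/

import Mathlib

/-!
Put `D := Σ dᵢ Xⁱ` in `R⟦X⟧`. The hypotheses say `X ^ (n + 1) ∣ D²`, so the coefficient of
`X ^ (n + 1)` in `D³ = D · D² = D² · D` can be read off both ways as `d₀ c = c d₀`, where
`c = d₀ d_{n+1} + ω + d_{n+1} d₀` is the leading coefficient of `D²`. Since `d₀² = 0`, the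
terms of `c` involving `d_{n+1}` commute with `d₀` on their own, leaving `d₀ ω = ω d₀`.
-/

open Finset

theorem sum_range_mul_sub_eq_add_sum_Icc_add {R : Type*} [AddCommMonoid R] [Mul R]
    (d : ℕ → R) (n : ℕ) :
    ∑ i ∈ range (n + 2), d i * d (n + 1 - i)
      = d 0 * d (n + 1) + ∑ i ∈ Icc 1 n, d i * d (n + 1 - i) + d (n + 1) * d 0 := by
  rw [sum_range_succ, sum_range_succ', Nat.sub_self, Nat.sub_zero, ← Ico_add_one_right_eq_Icc,
    sum_Ico_eq_sum_range, Nat.add_sub_cancel]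
  simp only [add_comm 1]
  abel

namespace PowerSeries

variable {R : Type*} [Semiring R]

theorem coeff_mul_of_X_pow_dvd_right {k : ℕ} (φ : R⟦X⟧) {ψ : R⟦X⟧} (h : X ^ k ∣ ψ) :
    coeff k (φ * ψ) = constantCoeff φ * coeff k ψ := by
  obtain ⟨χ, rfl⟩ := h
  rw [← mul_assoc, (commute_X_pow φ k).eq, mul_assoc]
  simp only [coeff_X_pow_mul', le_refl, ite_true, Nat.sub_self, coeff_zero_eq_constantCoeff_apply,
    map_mul]

theorem coeff_mul_of_X_pow_dvd_left {k : ℕ} {φ : R⟦X⟧} (h : X ^ k ∣ φ) (ψ : R⟦X⟧) :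
    coeff k (φ * ψ) = coeff k φ * constantCoeff ψ := by
  obtain ⟨χ, rfl⟩ := h
  rw [mul_assoc]
  simp only [coeff_X_pow_mul', le_refl, ite_true, Nat.sub_self, coeff_zero_eq_constantCoeff_apply,
    map_mul]

theorem commute_constantCoeff_coeff_mul_self {k : ℕ} {D : R⟦X⟧} (h : X ^ k ∣ D * D) :
    Commute (constantCoeff D) (coeff k (D * D)) := by
  have hcube := congrArg (coeff k) (mul_assoc D D D)
  rw [coeff_mul_of_X_pow_dvd_left h, coeff_mul_of_X_pow_dvd_right D h] at hcube
  exact hcube.symm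

theorem coeff_mk_mul_mk (d : ℕ → R) (m : ℕ) :
    coeff m (mk d * mk d) = ∑ i ∈ range (m + 1), d i * d (m - i) := by
  simp only [coeff_mul, coeff_mk, Nat.sum_antidiagonal_eq_sum_range_succ (fun i j => d i * d j)]

end PowerSeries

open PowerSeries

theorem obstruction_is_cocycle {R : Type*} [Ring R] (n : ℕ) (d : ℕ → R)
    (hd : ∀ m ≤ n, ∑ i ∈ Finset.range (m + 1), d i * d (m - i) = 0) :
    d 0 * (∑ i ∈ Finset.Icc 1 n, d i * d (n + 1 - i))
      - (∑ i ∈ Finset.Icc 1 n, d i * d (n + 1 - i)) * d 0 = 0 := by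
  have hdvd : X ^ (n + 1) ∣ PowerSeries.mk d * PowerSeries.mk d :=
    X_pow_dvd_iff.2 fun m hm => (coeff_mk_mul_mk d m).trans (hd m (by omega))
  have hcomm := (commute_constantCoeff_coeff_mul_self hdvd).eq
  rw [coeff_mk_mul_mk, sum_range_mul_sub_eq_add_sum_Icc_add, ← coeff_zero_eq_constantCoeff_apply,
    coeff_mk] at hcomm
  set ω := ∑ i ∈ Finset.Icc 1 n, d i * d (n + 1 - i)
  have hsq : d 0 * d 0 = 0 := by simpa using hd 0 n.zero_le
  calc d 0 * ω - ω * d 0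
      = d 0 * (d 0 * d (n + 1) + ω + d (n + 1) * d 0)
          - (d 0 * d (n + 1) + ω + d (n + 1) * d 0) * d 0
          - d 0 * d 0 * d (n + 1) + d (n + 1) * (d 0 * d 0) := by noncomm_ring
    _ = 0 := by rw [hcomm, hsq]; simp
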